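/- arXiv:1205.4891 — 5 statements merged into one kernel-verified Lean document; each statement's English description precedes it below -/
import Mathlib

section
/- Let ε > 0 and let C_1 and C_2 be two (3+ε)-clusters in X. Then C_1 ∩ C_2 = ∅, or C_1 ⊆ C_2, or C_2 ⊆ C_1. -/
/-
Let `z ∈ C₁ ∩ C₂`, `x₁ ∈ C₁ \ C₂`, `x₂ ∈ C₂ \ C₁`, and write `a = Δ(z,C₁)`, `b = Δ(z,C₂)`,
`u = d(x₁,z)`, `v = d(x₂,z)`. Comparing `x₁` with `z` inside `C₂` gives `(γ-1) b ≤ u`, and comparing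
`x₁` with `x₂` inside `C₁` gives `γ u ≤ v + (γ+1) a`; symmetrically for `x₂`. Adding up,
`(γ-1)² (a+b) ≤ (γ-1)(u+v) ≤ (γ+1)(a+b)`, which forces `γ ≤ 3` since `u > 0`.
-/

open Finset

/-- `Δ(x,A)` with the uniform measure: the average distance from `x` to points of `A`. -/
noncomputable def DptU {X : Type*} [MetricSpace X] (x : X) (A : Finset X) : ℝ :=
  (∑ y ∈ A, dist x y) / (A.card : ℝ)

/-- A `γ`-cluster: a nonempty set `C` with `Δ(y,C) ≥ γ·Δ(x,C)` for all `x ∈ C` and `y ∉ C`. -/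
def IsCluster {X : Type*} [Fintype X] [MetricSpace X] (γ : ℝ) (C : Finset X) : Prop :=
  C.Nonempty ∧ ∀ x ∈ C, ∀ y : X, y ∉ C → γ * DptU x C ≤ DptU y C

section DptU

variable {X : Type*} [MetricSpace X] {A : Finset X}

lemma dptU_le_dist_add_dptU (x y : X) (hA : A.Nonempty) :
    DptU x A ≤ dist x y + DptU y A := by
  have hcard : (0 : ℝ) < #A := by exact_mod_cast hA.card_pos
  have hsum : ∑ a ∈ A, dist x a ≤ #A * dist x y + ∑ a ∈ A, dist y a := by
    calc ∑ a ∈ A, dist x a ≤ ∑ a ∈ A, (dist x y + dist y a) :=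
          sum_le_sum fun a _ => dist_triangle x y a
      _ = #A * dist x y + ∑ a ∈ A, dist y a := by
          rw [sum_add_distrib, sum_const, nsmul_eq_mul]
  rw [DptU, DptU, div_le_iff₀ hcard, add_mul, div_mul_cancel₀ _ hcard.ne']
  linarith

lemma dist_le_dptU_add_dptU (x y : X) (hA : A.Nonempty) :
    dist x y ≤ DptU x A + DptU y A := by
  have hcard : (0 : ℝ) < #A := by exact_mod_cast hA.card_pos
  have hsum : #A * dist x y ≤ ∑ a ∈ A, dist x a + ∑ a ∈ A, dist y a := by
    calc #A * dist x y = ∑ _a ∈ A, dist x y := by rw [sum_const, nsmul_eq_mul]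
      _ ≤ ∑ a ∈ A, (dist x a + dist y a) :=
          sum_le_sum fun a _ => dist_triangle_right x y a
      _ = ∑ a ∈ A, dist x a + ∑ a ∈ A, dist y a := sum_add_distrib
  rw [DptU, DptU, ← add_div, le_div_iff₀ hcard]
  linarith

end DptU

namespace IsCluster

variable {X : Type*} [Fintype X] [MetricSpace X] {γ : ℝ} {C : Finset X} {x y z : X}

lemma sub_one_mul_dptU_le (hC : IsCluster γ C) (hz : z ∈ C) (hy : y ∉ C) :
    (γ - 1) * DptU z C ≤ dist y z := by
  have := hC.2 z hz y hy
  have := dptU_le_dist_add_dptU y z hC.1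
  linarith

lemma mul_dist_le (hγ : 0 ≤ γ) (hC : IsCluster γ C) (hx : x ∈ C) (hy : y ∉ C) :
    γ * dist x z ≤ dist y z + (γ + 1) * DptU z C :=
  calc γ * dist x z ≤ γ * (DptU x C + DptU z C) :=
        mul_le_mul_of_nonneg_left (dist_le_dptU_add_dptU x z hC.1) hγ
    _ ≤ DptU y C + γ * DptU z C := by linarith [hC.2 x hx y hy]
    _ ≤ dist y z + (γ + 1) * DptU z C := by linarith [dptU_le_dist_add_dptU y z hC.1]

variable [DecidableEq X] {C₁ C₂ : Finset X}

theorem inter_eq_empty_or_subset_or_subset (hγ : 3 < γ) (h₁ : IsCluster γ C₁)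
    (h₂ : IsCluster γ C₂) : C₁ ∩ C₂ = ∅ ∨ C₁ ⊆ C₂ ∨ C₂ ⊆ C₁ := by
  by_contra! h
  obtain ⟨⟨z, hz⟩, hC₁, hC₂⟩ := h
  obtain ⟨hz₁, hz₂⟩ := mem_inter.mp hz
  obtain ⟨x₁, hx₁, hx₁₂⟩ := not_subset.mp hC₁
  obtain ⟨x₂, hx₂, hx₂₁⟩ := not_subset.mp hC₂
  have hu : 0 < dist x₁ z := dist_pos.mpr fun h => hx₁₂ (h ▸ hz₂)
  have hv : 0 ≤ dist x₂ z := dist_nonneg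
  have hb := h₂.sub_one_mul_dptU_le hz₂ hx₁₂
  have ha := h₁.sub_one_mul_dptU_le hz₁ hx₂₁
  have hu' := h₁.mul_dist_le (z := z) (by linarith) hx₁ hx₂₁
  have hv' := h₂.mul_dist_le (z := z) (by linarith) hx₂ hx₁₂
  set s := DptU z C₁ + DptU z C₂
  have upper : (γ - 1) * (dist x₁ z + dist x₂ z) ≤ (γ + 1) * s := by linarith
  have lower : (γ - 1) * s ≤ dist x₁ z + dist x₂ z := by linarith
  have hs : s ≤ 0 := by
    nlinarith [mul_le_mul_of_nonneg_left lower (by linarith : (0 : ℝ) ≤ γ - 1)]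
  have : 0 < (γ - 1) * (dist x₁ z + dist x₂ z) := mul_pos (by linarith) (by linarith)
  nlinarith

end IsCluster

/-- Two `(3+ε)`-clusters are disjoint or nested. -/
theorem stmt_9 {X : Type*} [Fintype X] [MetricSpace X] [DecidableEq X]
    (ε : ℝ) (hε : 0 < ε) (C₁ C₂ : Finset X)
    (h₁ : IsCluster (3 + ε) C₁) (h₂ : IsCluster (3 + ε) C₂) :
    C₁ ∩ C₂ = ∅ ∨ C₁ ⊆ C₂ ∨ C₂ ⊆ C₁ :=
  h₁.inter_eq_empty_or_subset_or_subset (by linarith) h₂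
end

section
/- Let ε > 0 and let C be a (3+ε)-cluster in X with diameter r = max_{u,v ∈ C} d(u,v). Then there exists x ∈ C such that C = {y ∈ X : d(x,y) ≤ r}; in particular, every (3+ε)-cluster is a closed ball around one of its points. -/
open Finset
open scoped Classical

/-- Every `(3+ε)`-cluster `C` is a closed ball of radius `r = diam C` around one of its points. -/
theorem stmt_10 {X : Type*} [Fintype X] [MetricSpace X]
    (ε : ℝ) (hε : 0 < ε) (C : Finset X) (hC : IsCluster (3 + ε) C)
    (r : ℝ) (hr : r = (C ×ˢ C).sup' (hC.1.product hC.1) (fun p => dist p.1 p.2)) :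
    ∃ x ∈ C, C = Finset.univ.filter (fun y => dist x y ≤ r) := by
  have hne := hC.1
  have hclus := hC.2
  have hn : (0:ℝ) < (C.card : ℝ) := by exact_mod_cast hne.card_pos
  -- triangle-type lemmas for DptU
  have hA : ∀ a b : X, DptU a C ≤ dist a b + DptU b C := by
    intro a b
    have hs : ∑ z ∈ C, dist a z ≤ ∑ z ∈ C, (dist a b + dist b z) :=
      Finset.sum_le_sum fun z _ => dist_triangle a b z
    rw [Finset.sum_add_distrib, Finset.sum_const, nsmul_eq_mul] at hs
    have := (div_le_div_iff_of_pos_right hn).mpr hs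
    rw [add_div, mul_div_cancel_left₀ _ (ne_of_gt hn)] at this
    unfold DptU
    exact this
  have hB : ∀ a b : X, dist a b ≤ DptU a C + DptU b C := by
    intro a b
    have hs : ∑ _z ∈ C, dist a b ≤ ∑ z ∈ C, (dist a z + dist z b) :=
      Finset.sum_le_sum fun z _ => dist_triangle a z b
    rw [Finset.sum_const, nsmul_eq_mul, Finset.sum_add_distrib] at hs
    have hsym : ∑ z ∈ C, dist z b = ∑ z ∈ C, dist b z := by
      apply Finset.sum_congr rfl; intro z _; exact dist_comm z b
    rw [hsym] at hs
    have := (div_le_div_iff_of_pos_right hn).mpr hs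
    rw [mul_div_cancel_left₀ _ (ne_of_gt hn), add_div] at this
    unfold DptU
    exact this
  have hDnn : ∀ a : X, 0 ≤ DptU a C := by
    intro a
    exact div_nonneg (Finset.sum_nonneg fun z _ => dist_nonneg) (le_of_lt hn)
  obtain ⟨x, hxC, hxmax⟩ := Finset.exists_max_image C (fun z => DptU z C) hne
  obtain ⟨p, hp, hpr⟩ := Finset.exists_mem_eq_sup' (hne.product hne) (fun p : X × X => dist p.1 p.2)
  rw [hpr] at hr
  obtain ⟨hp1, hp2⟩ := Finset.mem_product.1 hp
  refine ⟨x, hxC, ?_⟩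
  ext y
  simp only [Finset.mem_filter, Finset.mem_univ, true_and]
  constructor
  · intro hy
    have hmem : (x, y) ∈ C ×ˢ C := Finset.mem_product.2 ⟨hxC, hy⟩
    rw [hr, ← hpr]
    exact Finset.le_sup' (fun p : X × X => dist p.1 p.2) hmem
  · intro hdy
    by_contra hyC
    have h1 := hclus x hxC y hyC
    have h2 := hA y x
    have h3 : r ≤ DptU p.1 C + DptU p.2 C := by rw [hr]; exact hB p.1 p.2
    have h4 := hxmax p.1 hp1
    have h5 := hxmax p.2 hp2
    have hdyx : dist y x = dist x y := dist_comm y x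
    have hxnn := hDnn x
    -- (3+ε)Δx ≤ Δy ≤ dist x y + Δx ≤ r + Δx ≤ 2Δx + Δx  ⇒ εΔx ≤ 0 ⇒ Δx = 0, r ≤ 0
    have hx0 : DptU x C ≤ 0 := by nlinarith
    have hr0 : r ≤ 0 := by nlinarith
    have : dist x y ≤ 0 := le_trans hdy hr0
    have hxy : y = x := (eq_of_dist_eq_zero (le_antisymm this dist_nonneg)).symm
    exact hyC (hxy ▸ hxC)
end

section
/- Let X = {0,1,2,3} be the vertex set of the 4-cycle with the graph metric d(i,j) = min(|i−j|, 4−|i−j|) and the uniform probability measure. Then: (a) C = {0,1} is a 3-cluster, and there exist no x ∈ X and r ≥ 0 with C = {y ∈ X : d(x,y) ≤ r} (so a 3-cluster need not be a ball); (b) C_1 = {0,1} and C_2 = {1,2} are 3-clusters with C_1 ∩ C_2 ≠ ∅, C_1 ⊄ C_2 and C_2 ⊄ C_1 (so two 3-clusters may intersect without being nested). Hence the constant 3+ε in the structure theorems for (3+ε)-clusters cannot be improved to 3. -/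
open Finset
open scoped Classical

/-- On the 4-cycle `{0,1,2,3}` with the graph metric `d(i,j) = min(|i−j|, 4−|i−j|)`:
(a) `{0,1}` is a `3`-cluster but not a ball; (b) `{0,1}` and `{1,2}` are intersecting,
non-nested `3`-clusters. Hence `3+ε` cannot be improved to `3` in the structure theorems. -/
theorem stmt_11 [MetricSpace (Fin 4)]
    (hdist : ∀ i j : Fin 4,
      dist i j = min |((i : ℕ) : ℝ) - ((j : ℕ) : ℝ)| (4 - |((i : ℕ) : ℝ) - ((j : ℕ) : ℝ)|)) :
    (IsCluster 3 ({0, 1} : Finset (Fin 4)) ∧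
      ¬ ∃ (x : Fin 4) (r : ℝ), 0 ≤ r ∧
        ({0, 1} : Finset (Fin 4)) = Finset.univ.filter (fun y => dist x y ≤ r)) ∧
    (IsCluster 3 ({1, 2} : Finset (Fin 4)) ∧
      (({0, 1} : Finset (Fin 4)) ∩ ({1, 2} : Finset (Fin 4))).Nonempty ∧
      ¬ ({0, 1} : Finset (Fin 4)) ⊆ ({1, 2} : Finset (Fin 4)) ∧
      ¬ ({1, 2} : Finset (Fin 4)) ⊆ ({0, 1} : Finset (Fin 4))) := by
  have key : ∀ i j : Fin 4, dist i j =
      min |((i : ℕ) : ℝ) - ((j : ℕ) : ℝ)| (4 - |((i : ℕ) : ℝ) - ((j : ℕ) : ℝ)|) := hdist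
  have c3 : ((3 : Fin 4) : ℕ) = (3 : ℕ) := rfl
  have c2 : ((2 : Fin 4) : ℕ) = (2 : ℕ) := rfl
  have c1 : ((1 : Fin 4) : ℕ) = (1 : ℕ) := rfl
  have c0 : ((0 : Fin 4) : ℕ) = (0 : ℕ) := rfl
  refine ⟨⟨⟨⟨0, by decide⟩, ?_⟩, ?_⟩, ⟨⟨⟨1, by decide⟩, ?_⟩, ⟨1, by decide⟩, ?_, ?_⟩⟩
  · intro x hx y hy
    fin_cases x <;> fin_cases y <;>
      simp_all [DptU, Finset.sum_insert, key, c0, c1, c2, c3] <;> norm_num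
  · rintro ⟨x, r, hr, hset⟩
    have hx : x ∈ ({0, 1} : Finset (Fin 4)) := by
      rw [hset]
      simp only [Finset.mem_filter, Finset.mem_univ, true_and, dist_self]
      exact hr
    have hd : ∀ y : Fin 4, y ∈ ({0, 1} : Finset (Fin 4)) ↔ dist x y ≤ r := by
      intro y
      rw [hset]
      simp
    fin_cases hx
    · have h1 : dist (0 : Fin 4) 1 ≤ r := (hd 1).mp (by decide)
      have h3 : ¬ dist (0 : Fin 4) 3 ≤ r := fun h => by
        have := (hd 3).mpr h; exact absurd this (by decide)
      rw [key, c0, c1] at h1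
      rw [key, c0, c3] at h3
      norm_num at h1 h3
      linarith
    · have h0 : dist (1 : Fin 4) 0 ≤ r := (hd 0).mp (by decide)
      have h2 : ¬ dist (1 : Fin 4) 2 ≤ r := fun h => by
        have := (hd 2).mpr h; exact absurd this (by decide)
      rw [key, c0, c1] at h0
      rw [key, c1, c2] at h2
      norm_num at h0 h2
      linarith
  · intro x hx y hy
    fin_cases x <;> fin_cases y <;>
      simp_all [DptU, Finset.sum_insert, key, c0, c1, c2, c3] <;> norm_num
  · decide
  · decide
end

section
/- Let α > 0 and ε > 0. If 𝒫 and 𝒫' are two partitions of X all of whose parts are minimal (α,3+ε)-clusters, then 𝒫 = 𝒫'. In other words, X admits at most one partition into minimal (α,3+ε)-clusters. -/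
/-!
Let `γ > 3`. If two `(α,γ)`-clusters `C`, `C'` share a point `z` but neither contains the
other, pick `u ∈ C \ C'` and `v ∈ C' \ C`. The cluster inequalities at `u` and `v`, together
with the triangle inequality through `z`, bound `M = Δ(z,C) + Δ(z,C')` and
`S = Δ(u,C) + Δ(v,C')` against each other: `(γ-1) S ≤ 2M` and `(γ-2) M ≤ S`. Hence
`γ (γ-3) M ≤ 0`, while `M > 0` because `C` has a point other than `z`. So clusters are
laminar, intersecting minimal clusters coincide, and two partitions into minimal clusters
have the same blocks.
-/

open Finset

/-- An `(α,γ)`-cluster for the uniform measure: a nonempty set `C` with `|C|/|X| ≥ α` and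
`Δ(y,C) ≥ γ·Δ(x,C)` for all `x ∈ C` and `y ∉ C`. -/
def IsACluster {X : Type*} [Fintype X] [MetricSpace X] (α γ : ℝ) (C : Finset X) : Prop :=
  C.Nonempty ∧ α ≤ (C.card : ℝ) / (Fintype.card X : ℝ) ∧
    ∀ x ∈ C, ∀ y : X, y ∉ C → γ * DptU x C ≤ DptU y C

/-- A minimal `(α,γ)`-cluster: an `(α,γ)`-cluster containing no `(α,γ)`-cluster other
than itself. -/
def IsMinCluster {X : Type*} [Fintype X] [MetricSpace X] (α γ : ℝ) (C : Finset X) : Prop :=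
  IsACluster α γ C ∧ ∀ C' ⊆ C, IsACluster α γ C' → C' = C

/-- A partition of `X` (as an unordered family of nonempty pairwise disjoint sets covering `X`). -/
def IsPartitionFam {X : Type*} [Fintype X] (Fam : Finset (Finset X)) : Prop :=
  (∀ C ∈ Fam, C.Nonempty) ∧
  (∀ C ∈ Fam, ∀ C' ∈ Fam, C ≠ C' → Disjoint C C') ∧
  (∀ x : X, ∃ C ∈ Fam, x ∈ C)

section

variable {X : Type*} [MetricSpace X]

lemma DptU_le_dist_add (v z : X) {A : Finset X} (hA : A.Nonempty) :
    DptU v A ≤ dist v z + DptU z A := by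
  have hc : (0 : ℝ) < #A := by exact_mod_cast hA.card_pos
  have hsum : ∑ y ∈ A, dist v y ≤ #A * dist v z + ∑ y ∈ A, dist z y := by
    calc ∑ y ∈ A, dist v y ≤ ∑ y ∈ A, (dist v z + dist z y) :=
          sum_le_sum fun y _ => dist_triangle v z y
      _ = #A * dist v z + ∑ y ∈ A, dist z y := by
          rw [sum_add_distrib, sum_const, nsmul_eq_mul]
  unfold DptU
  rw [div_le_iff₀ hc, add_mul, div_mul_cancel₀ _ hc.ne']
  linarith

lemma dist_le_DptU_add (x x' : X) {A : Finset X} (hA : A.Nonempty) :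
    dist x x' ≤ DptU x A + DptU x' A := by
  have hc : (0 : ℝ) < #A := by exact_mod_cast hA.card_pos
  have hsum : #A * dist x x' ≤ ∑ y ∈ A, (dist x y + dist x' y) := by
    calc (#A : ℝ) * dist x x' = ∑ _y ∈ A, dist x x' := by rw [sum_const, nsmul_eq_mul]
      _ ≤ ∑ y ∈ A, (dist x y + dist x' y) := sum_le_sum fun y _ => dist_triangle_right x x' y
  unfold DptU
  rw [← add_div, le_div_iff₀ hc, ← sum_add_distrib]
  linarith

lemma DptU_pos {z u : X} {A : Finset X} (hz : z ∈ A) (hu : u ∈ A) (huz : u ≠ z) :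
    0 < DptU z A := by
  have hc : (0 : ℝ) < #A := by exact_mod_cast card_pos.2 ⟨z, hz⟩
  have hsum : dist z u ≤ ∑ y ∈ A, dist z y :=
    single_le_sum (f := dist z) (fun y _ => dist_nonneg) hu
  exact div_pos (hsum.trans_lt' (dist_pos.2 huz.symm)) hc

variable [Fintype X] {α α' γ : ℝ}

theorem IsACluster.subset_or_subset_of_mem (hγ : 3 < γ) {C C' : Finset X}
    (hC : IsACluster α γ C) (hC' : IsACluster α' γ C') {z : X} (hz : z ∈ C) (hz' : z ∈ C') :
    C ⊆ C' ∨ C' ⊆ C := by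
  by_contra! hnot
  obtain ⟨u, huC, huC'⟩ := not_subset.1 hnot.1
  obtain ⟨v, hvC', hvC⟩ := not_subset.1 hnot.2
  have ha : 0 < DptU z C := DptU_pos hz huC (ne_of_mem_of_not_mem hz' huC').symm
  have hb : 0 ≤ DptU z C' := div_nonneg (sum_nonneg fun y _ => dist_nonneg) (Nat.cast_nonneg _)
  have hvC_le : DptU v C ≤ DptU v C' + DptU z C' + DptU z C :=
    (DptU_le_dist_add v z ⟨z, hz⟩).trans
      (add_le_add_left (dist_le_DptU_add v z ⟨z, hz'⟩) _)
  have huC'_le : DptU u C' ≤ DptU u C + DptU z C + DptU z C' :=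
    (DptU_le_dist_add u z ⟨z, hz'⟩).trans
      (add_le_add_left (dist_le_DptU_add u z ⟨z, hz⟩) _)
  have huv := hC.2.2 u huC v hvC
  have hzv := hC.2.2 z hz v hvC
  have hvu := hC'.2.2 v hvC' u huC'
  have hzu := hC'.2.2 z hz' u huC'
  set M := DptU z C + DptU z C'
  set S := DptU u C + DptU v C'
  have hS : (γ - 1) * S ≤ 2 * M := by linarith
  have hM : (γ - 2) * M ≤ S := by linarith
  have hMpos : 0 < M := by positivity
  nlinarith [mul_le_mul_of_nonneg_left hM (by linarith : (0 : ℝ) ≤ γ - 1),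
    mul_pos (mul_pos (by linarith : (0 : ℝ) < γ) (sub_pos.2 hγ)) hMpos]

theorem IsMinCluster.eq_of_mem (hγ : 3 < γ) {C C' : Finset X}
    (hC : IsMinCluster α γ C) (hC' : IsMinCluster α γ C') {z : X} (hz : z ∈ C) (hz' : z ∈ C') :
    C = C' := by
  rcases hC.1.subset_or_subset_of_mem hγ hC'.1 hz hz' with h | h
  · exact hC'.2 C h hC.1
  · exact (hC.2 C' h hC'.1).symm

end

lemma Finset.subset_of_eq_of_mem_of_mem {X : Type*} {P P' : Finset (Finset X)}
    (hne : ∀ C ∈ P, C.Nonempty) (hcover : ∀ x, ∃ C' ∈ P', x ∈ C')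
    (heq : ∀ C ∈ P, ∀ C' ∈ P', ∀ x ∈ C, x ∈ C' → C = C') : P ⊆ P' := by
  intro C hC
  obtain ⟨x, hx⟩ := hne C hC
  obtain ⟨C', hC', hx'⟩ := hcover x
  rwa [heq C hC C' hC' x hx hx']

theorem stmt_12_general {X : Type*} [Fintype X] [MetricSpace X]
    (α ε : ℝ) (hε : 0 < ε)
    (Fam Fam' : Finset (Finset X))
    (hFam : IsPartitionFam Fam) (hFam' : IsPartitionFam Fam')
    (hmin : ∀ C ∈ Fam, IsMinCluster α (3 + ε) C)
    (hmin' : ∀ C ∈ Fam', IsMinCluster α (3 + ε) C) :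
    Fam = Fam' := by
  have hγ : 3 < 3 + ε := by linarith
  have heq : ∀ C ∈ Fam, ∀ C' ∈ Fam', ∀ x ∈ C, x ∈ C' → C = C' :=
    fun C hC C' hC' _ hx hx' => (hmin C hC).eq_of_mem hγ (hmin' C' hC') hx hx'
  exact (subset_of_eq_of_mem_of_mem hFam.1 hFam'.2.2 heq).antisymm
    (subset_of_eq_of_mem_of_mem hFam'.1 hFam.2.2
      fun C' hC' C hC x hx' hx => (heq C hC C' hC' x hx hx').symm)

/-- `X` admits at most one partition into minimal `(α,3+ε)`-clusters. -/
theorem stmt_12 {X : Type*} [Fintype X] [MetricSpace X] [DecidableEq X]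
    (α ε : ℝ) (hα : 0 < α) (hε : 0 < ε)
    (Fam Fam' : Finset (Finset X))
    (hFam : IsPartitionFam Fam) (hFam' : IsPartitionFam Fam')
    (hmin : ∀ C ∈ Fam, IsMinCluster α (3 + ε) C)
    (hmin' : ∀ C ∈ Fam', IsMinCluster α (3 + ε) C) :
    Fam = Fam' :=
  stmt_12_general α ε hε Fam Fam' hFam hFam' hmin hmin'
end

section
/- Let n ≥ 1 and γ > 1. Let X = {x_1,…,x_n} ∪ {y_1,…,y_n} be a set of 2n distinct points with d(x_i,y_i) = 1 for every i and d(u,v) = γ for every other pair of distinct points u,v (this d is a metric), equipped with the uniform probability measure, and let α = 1/(2n). Then every singleton {u} (u ∈ X) is an (α,γ)-cluster, every pair {x_i,y_i} is an (α,γ)-cluster, and consequently X admits at least 2^n distinct partitions into (α,γ)-clusters. -/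
open Finset
open scoped Classical

def blockOf (n : ℕ) (S : Finset (Fin n)) (u : Fin n × Bool) : Finset (Fin n × Bool) :=
  if u.1 ∈ S then {(u.1, false), (u.1, true)} else {u}

lemma mem_blockOf_self (n : ℕ) (S : Finset (Fin n)) (u : Fin n × Bool) :
    u ∈ blockOf n S u := by
  unfold blockOf
  split
  · cases u with
    | mk i b => cases b <;> simp
  · simp

lemma blockOf_eq_of_mem (n : ℕ) (S : Finset (Fin n)) (u w : Fin n × Bool)
    (hw : w ∈ blockOf n S u) : blockOf n S u = blockOf n S w := by
  unfold blockOf at *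
  by_cases h : u.1 ∈ S
  · rw [if_pos h] at hw ⊢
    have h1 : w.1 = u.1 := by
      simp only [mem_insert, mem_singleton] at hw
      rcases hw with hw | hw <;> simp [hw]
    rw [h1, if_pos h]
  · rw [if_neg h] at hw ⊢
    simp only [mem_singleton] at hw
    subst hw
    rw [if_neg h]

/-- In the `2n`-point space `{x_1,…,x_n} ∪ {y_1,…,y_n}` (modelled as `Fin n × Bool`, where
`x_i = (i, false)` and `y_i = (i, true)`) with `d(x_i,y_i) = 1` and all other distances `γ`,
and `α = 1/(2n)`: every singleton and every pair `{x_i,y_i}` is an `(α,γ)`-cluster, and there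
are at least `2^n` partitions of the space into `(α,γ)`-clusters. -/
theorem stmt_13 (n : ℕ) (hn : 1 ≤ n) (γ : ℝ) (hγ : 1 < γ)
    [MetricSpace (Fin n × Bool)]
    (hdist : ∀ u v : Fin n × Bool, u ≠ v →
      dist u v = if u.1 = v.1 then (1 : ℝ) else γ) :
    (∀ u : Fin n × Bool, IsACluster (1 / (2 * n)) γ ({u} : Finset (Fin n × Bool))) ∧
    (∀ i : Fin n,
      IsACluster (1 / (2 * n)) γ ({(i, false), (i, true)} : Finset (Fin n × Bool))) ∧
    (2 : ℕ) ^ n ≤ (Finset.univ.filter (fun Fam : Finset (Finset (Fin n × Bool)) =>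
      IsPartitionFam Fam ∧ ∀ C ∈ Fam, IsACluster (1 / (2 * n)) γ C)).card := by
  have hγ0 : (0:ℝ) < γ := lt_trans one_pos hγ
  have hnR : (0:ℝ) < 2 * n := by
    have : (1:ℝ) ≤ n := by exact_mod_cast hn
    linarith
  have hcardX : (Fintype.card (Fin n × Bool) : ℝ) = 2 * n := by
    simp [Fintype.card_prod]; ring
  have hpairne : ∀ i : Fin n, ((i, false) : Fin n × Bool) ≠ (i, true) := by
    intro i h
    simpa using congrArg Prod.snd h
  -- singletons
  have h1 : ∀ u : Fin n × Bool, IsACluster (1 / (2 * n)) γ ({u} : Finset (Fin n × Bool)) := by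
    intro u
    refine ⟨singleton_nonempty u, ?_, ?_⟩
    · rw [hcardX, Finset.card_singleton]
      norm_num
    · intro x hx y hy
      simp only [mem_singleton] at hx hy
      subst hx
      have e1 : DptU x ({x} : Finset (Fin n × Bool)) = 0 := by simp [DptU]
      have e2 : DptU y ({x} : Finset (Fin n × Bool)) = dist y x := by simp [DptU]
      rw [e1, e2, mul_zero]
      exact dist_nonneg
  -- pairs
  have h2 : ∀ i : Fin n,
      IsACluster (1 / (2 * n)) γ ({(i, false), (i, true)} : Finset (Fin n × Bool)) := by
    intro i
    have hc2 : ({(i, false), (i, true)} : Finset (Fin n × Bool)).card = 2 := by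
      rw [Finset.card_insert_of_notMem (by simp), Finset.card_singleton]
    refine ⟨⟨(i, false), by simp⟩, ?_, ?_⟩
    · rw [hcardX, hc2]
      exact div_le_div₀ (by norm_num) (by norm_num) hnR le_rfl
    · intro x hx y hy
      have hd1 : dist ((i, false) : Fin n × Bool) (i, true) = 1 := by
        rw [hdist _ _ (hpairne i)]; simp
      have hd1' : dist ((i, true) : Fin n × Bool) (i, false) = 1 := by
        rw [dist_comm]; exact hd1
      have hx' : DptU x ({(i, false), (i, true)} : Finset (Fin n × Bool)) = 1 / 2 := by
        simp only [mem_insert, mem_singleton] at hx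
        rcases hx with rfl | rfl <;>
          · rw [DptU, Finset.sum_pair (hpairne i), hc2]
            simp [hd1, hd1']
      have hy1 : y.1 ≠ i := by
        intro h
        apply hy
        have : y = (i, y.2) := by rw [← h]
        rw [this]
        cases y.2 <;> simp
      simp only [mem_insert, mem_singleton, not_or] at hy
      have hdy1 : dist y ((i, false) : Fin n × Bool) = γ := by
        rw [hdist _ _ hy.1]; simp [hy1]
      have hdy2 : dist y ((i, true) : Fin n × Bool) = γ := by
        rw [hdist _ _ hy.2]; simp [hy1]
      have hy' : DptU y ({(i, false), (i, true)} : Finset (Fin n × Bool)) = γ := by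
        rw [DptU, Finset.sum_pair (hpairne i), hc2, hdy1, hdy2]
        ring
      rw [hx', hy']
      linarith
  refine ⟨h1, h2, ?_⟩
  -- counting
  have hmem : ∀ S : Finset (Fin n),
      Finset.univ.image (blockOf n S) ∈ Finset.univ.filter
        (fun Fam : Finset (Finset (Fin n × Bool)) =>
          IsPartitionFam Fam ∧ ∀ C ∈ Fam, IsACluster (1 / (2 * n)) γ C) := by
    intro S
    rw [mem_filter]
    refine ⟨mem_univ _, ⟨?_, ?_, ?_⟩, ?_⟩
    · intro C hC
      rcases mem_image.1 hC with ⟨u, _, rfl⟩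
      exact ⟨u, mem_blockOf_self n S u⟩
    · intro C hC C' hC' hCC'
      rcases mem_image.1 hC with ⟨u, _, rfl⟩
      rcases mem_image.1 hC' with ⟨v, _, rfl⟩
      rw [Finset.disjoint_left]
      intro w hw hw'
      exact hCC' ((blockOf_eq_of_mem n S u w hw).trans
        (blockOf_eq_of_mem n S v w hw').symm)
    · intro x
      exact ⟨blockOf n S x, mem_image_of_mem _ (mem_univ x), mem_blockOf_self n S x⟩
    · intro C hC
      rcases mem_image.1 hC with ⟨u, _, rfl⟩
      unfold blockOf
      split
      · exact h2 u.1
      · exact h1 u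
  have key : ∀ S T : Finset (Fin n),
      Finset.univ.image (blockOf n S) = Finset.univ.image (blockOf n T) →
      ∀ i, i ∈ S → i ∈ T := by
    intro S T h i hi
    have hmem' : blockOf n S (i, false) ∈ Finset.univ.image (blockOf n T) := by
      rw [← h]; exact mem_image_of_mem _ (mem_univ _)
    rcases mem_image.1 hmem' with ⟨u, _, hu⟩
    have hSi : blockOf n S (i, false) = {(i, false), (i, true)} := by
      simp [blockOf, hi]
    rw [hSi] at hu
    by_cases ht : u.1 ∈ T
    · have hTu : blockOf n T u = {(u.1, false), (u.1, true)} := by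
        simp [blockOf, ht]
      rw [hTu] at hu
      have : ((u.1, false) : Fin n × Bool) ∈
          ({(i, false), (i, true)} : Finset (Fin n × Bool)) := by
        rw [← hu]; simp
      simp only [mem_insert, mem_singleton, Prod.mk.injEq] at this
      rcases this with ⟨h', _⟩ | ⟨_, h'⟩
      · rwa [← h']
      · simp at h'
    · have hTu : blockOf n T u = {u} := by simp [blockOf, ht]
      rw [hTu] at hu
      have := congrArg Finset.card hu
      rw [Finset.card_singleton,
        Finset.card_insert_of_notMem (by simp), Finset.card_singleton] at this
      simp at this
  have hinj : Set.InjOn (fun S : Finset (Fin n) => Finset.univ.image (blockOf n S))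
      ↑(Finset.univ : Finset (Finset (Fin n))) := by
    intro S _ T _ hST
    simp only at hST
    ext i
    exact ⟨key S T hST i, key T S hST.symm i⟩
  calc (2:ℕ) ^ n = (Finset.univ : Finset (Finset (Fin n))).card := by simp
    _ ≤ _ := Finset.card_le_card_of_injOn _ (fun S _ => hmem S) hinj
end
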